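/- arXiv:2005.01681 — 5 statements merged into one kernel-verified Lean document; each statement's English description precedes it below -/
import Mathlib

section
/- In an acyclic monoid H, every element of finite order is a unit, where the order of x is the cardinality of the set {xⁿ : n ≥ 1}. -/
/-! If `x` has finite order, two distinct positive powers coincide, `x ^ m = x ^ n` with
`m < n`. Then `x ^ (n - m) * x ^ m = x ^ m`, so acyclicity forces `x ^ (n - m)` to be a unit,
and a positive power of `x` is a unit only if `x` is. -/

def Monoid.IsAcyclic (M : Type*) [Monoid M] : Prop :=
  ∀ u x v : M, (¬ IsUnit u ∨ ¬ IsUnit v) → u * x * v ≠ x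

namespace Monoid.IsAcyclic

variable {M : Type*} [Monoid M]

theorem isUnit_of_mul_eq_self (hM : IsAcyclic M) {u x : M} (h : u * x = x) : IsUnit u := by
  by_contra hu
  exact hM u x 1 (Or.inl hu) (by rw [mul_one, h])

theorem isUnit_of_pow_eq_pow (hM : IsAcyclic M) {x : M} {m n : ℕ} (hmn : m < n)
    (h : x ^ m = x ^ n) : IsUnit x := by
  have hfix : x ^ (n - m) * x ^ m = x ^ m := by
    rw [← pow_add, Nat.sub_add_cancel hmn.le, h]
  exact (isUnit_pow_iff (Nat.sub_ne_zero_of_lt hmn)).1 (hM.isUnit_of_mul_eq_self hfix)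

end Monoid.IsAcyclic

theorem exists_lt_pow_eq_pow_of_finite {M : Type*} [Monoid M] {x : M}
    (hfin : {y : M | ∃ n : ℕ, 1 ≤ n ∧ y = x ^ n}.Finite) :
    ∃ m n : ℕ, m < n ∧ x ^ m = x ^ n := by
  have hmem : ∀ n : ℕ, x ^ (n + 1) ∈ {y : M | ∃ n : ℕ, 1 ≤ n ∧ y = x ^ n} :=
    fun n ↦ ⟨n + 1, n.succ_pos, rfl⟩
  obtain ⟨m, n, hmn, h⟩ := Set.Finite.exists_lt_map_eq_of_forall_mem hmem hfin
  exact ⟨m + 1, n + 1, Nat.succ_lt_succ hmn, h⟩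

theorem stmt7 {M : Type*} [Monoid M]
    (hac : ∀ u x v : M, (¬ IsUnit u ∨ ¬ IsUnit v) → u * x * v ≠ x)
    (x : M) (hfin : {y : M | ∃ n : ℕ, 1 ≤ n ∧ y = x ^ n}.Finite) : IsUnit x := by
  obtain ⟨m, n, hmn, h⟩ := exists_lt_pow_eq_pow_of_finite hfin
  exact Monoid.IsAcyclic.isUnit_of_pow_eq_pow hac hmn h
end

section
/- Every unit-cancellative normalizing monoid is acyclic. -/
/-!
Normality lets `v` pass through `x`: `x * v = h * x`, so `u * x * v = x` becomes
`(u * h) * x = x`, and unit-cancellativity makes `u * h` a unit. Unit-cancellative monoids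
are Dedekind-finite (if `a * b = 1` then `b * a` is an idempotent unit, hence `1`), so a left
factor of a unit is a unit, and `u` is one. Symmetrically `x * k = u * x` gives
`x * (k * v) = x`, and `v` is a unit.
-/

def IsUnitCancellative (M : Type*) [Monoid M] : Prop :=
  ∀ x y : M, ¬ IsUnit y → x * y ≠ x ∧ y * x ≠ x

namespace IsUnitCancellative

variable {M : Type*} [Monoid M]

theorem isUnit_of_mul_eq_self_left (huc : IsUnitCancellative M) {x y : M}
    (h : y * x = x) : IsUnit y :=
  not_not.mp fun hy => (huc x y hy).2 h

theorem isUnit_of_mul_eq_self_right (huc : IsUnitCancellative M) {x y : M}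
    (h : x * y = x) : IsUnit y :=
  not_not.mp fun hy => (huc x y hy).1 h

theorem isDedekindFiniteMonoid (huc : IsUnitCancellative M) : IsDedekindFiniteMonoid M where
  mul_eq_one_symm {a b} hab := by
    have hunit : IsUnit (b * a) :=
      huc.isUnit_of_mul_eq_self_left (x := b) (by rw [mul_assoc, hab, mul_one])
    have hidem : IsIdempotentElem (b * a) := by
      rw [IsIdempotentElem, mul_assoc, ← mul_assoc a, hab, one_mul]
    exact (IsIdempotentElem.iff_eq_one_of_isUnit hunit).mp hidem

end IsUnitCancellative

theorem stmt9 {M : Type*} [Monoid M]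
    (hnorm : ∀ a x : M, (∃ h : M, a * h = x) ↔ (∃ h : M, h * a = x))
    (huc : ∀ x y : M, ¬ IsUnit y → x * y ≠ x ∧ y * x ≠ x) :
    ∀ u x v : M, (¬ IsUnit u ∨ ¬ IsUnit v) → u * x * v ≠ x := by
  have hM : IsUnitCancellative M := huc
  have := hM.isDedekindFiniteMonoid
  intro u x v huv hx
  obtain ⟨h, hh⟩ := (hnorm x (x * v)).mp ⟨v, rfl⟩
  obtain ⟨k, hk⟩ := (hnorm x (u * x)).mpr ⟨u, rfl⟩
  have hu : IsUnit u := isUnit_of_mul_isUnit_left <|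
    hM.isUnit_of_mul_eq_self_left (x := x) (by rw [mul_assoc, hh, ← mul_assoc, hx])
  have hv : IsUnit v := isUnit_of_mul_isUnit_right <|
    hM.isUnit_of_mul_eq_self_right (x := x) (by rw [← mul_assoc, hk, hx])
  exact huv.elim (· hu) (· hv)
end

section
/- Let R be a non-trivial commutative ring and n ≥ 2, and let S_n(R) be the multiplicative monoid of n×n matrices over R whose determinant is a regular (cancellable) element of R. Then S_n(R) is an acyclic monoid: if ABC = B for A, B, C ∈ S_n(R), then A and C are invertible matrices. -/
open Matrix

theorem mul_eq_one_of_mul_mul_eq_self {M : Type*} [CommMonoid M] {a b c : M}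
    (hb : IsLeftRegular b) (h : a * b * c = b) : a * c = 1 :=
  hb <| show b * (a * c) = b * 1 by rw [mul_one, mul_left_comm, ← mul_assoc, h]

theorem Matrix.isUnit_and_isUnit_of_mul_mul_eq_self {R : Type*} [CommRing R]
    {n : Type*} [Fintype n] [DecidableEq n] {A B C : Matrix n n R}
    (hB : IsLeftRegular B.det) (h : A * B * C = B) : IsUnit A ∧ IsUnit C := by
  have hAC : A.det * C.det = 1 :=
    mul_eq_one_of_mul_mul_eq_self hB (by rw [← det_mul, ← det_mul, h])
  simp only [isUnit_iff_isUnit_det]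
  exact ⟨.of_mul_eq_one _ hAC, .of_mul_eq_one _ (mul_comm A.det _ ▸ hAC)⟩

theorem stmt10_general {R : Type*} [CommRing R] {n : Type*} [Fintype n] [DecidableEq n]
    (A B C : Matrix n n R)
    (hB : ∀ x : R, x ≠ 0 → B.det * x ≠ 0)
    (h : A * B * C = B) : IsUnit A ∧ IsUnit C :=
  isUnit_and_isUnit_of_mul_mul_eq_self
    (isLeftRegular_of_non_zero_divisor _ fun x hx => not_imp_not.mp (hB x) hx) h

theorem stmt10 {R : Type*} [CommRing R] [Nontrivial R] {n : Type*} [Fintype n] [DecidableEq n]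
    (hn : 2 ≤ Fintype.card n)
    (A B C : Matrix n n R)
    (hA : ∀ x : R, x ≠ 0 → A.det * x ≠ 0)
    (hB : ∀ x : R, x ≠ 0 → B.det * x ≠ 0)
    (hC : ∀ x : R, x ≠ 0 → C.det * x ≠ 0)
    (h : A * B * C = B) : IsUnit A ∧ IsUnit C :=
  stmt10_general A B C hB h
end

section
/- In an acyclic monoid, every prime element is an atom. -/
/-- `a` two-sided divides `b` in the monoid: `b ∈ HaH`. -/
def TDvd {M : Type*} [Monoid M] (a b : M) : Prop := ∃ u v : M, u * a * v = b

/-!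
If a prime `p = x * y` divides `x`, say `x = u * p * v`, then `u * p * (v * y) = p`, so acyclicity
makes `v * y` a unit; symmetrically if `p` divides `y`. An acyclic monoid is Dedekind-finite
(`a * b = 1` makes `b * a` an idempotent unit, hence `1`), and in a Dedekind-finite monoid the
factors of a unit are units, so one of `x`, `y` is a unit.
-/

def IsAcyclicMonoid (M : Type*) [Monoid M] : Prop :=
  ∀ u x v : M, (¬ IsUnit u ∨ ¬ IsUnit v) → u * x * v ≠ x

namespace IsAcyclicMonoid

variable {M : Type*} [Monoid M] (hM : IsAcyclicMonoid M)
include hM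

theorem isUnit_of_mul_mul_eq {u x v : M} (h : u * x * v = x) : IsUnit u ∧ IsUnit v := by
  by_contra hn
  exact hM u x v (not_and_or.mp hn) h

theorem isDedekindFiniteMonoid : IsDedekindFiniteMonoid M where
  mul_eq_one_symm {a b} hab := by
    have hunit : IsUnit (b * a) :=
      (hM.isUnit_of_mul_mul_eq (u := 1) (x := a) (v := b * a)
        (by rw [one_mul, ← mul_assoc, hab, one_mul])).2
    have hidem : IsIdempotentElem (b * a) := by
      rw [IsIdempotentElem, mul_assoc, ← mul_assoc a, hab, one_mul]
    exact (IsIdempotentElem.iff_eq_one_of_isUnit hunit).mp hidem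

theorem isUnit_right_of_tdvd_mul {x y : M} (h : TDvd (x * y) x) : IsUnit y := by
  obtain ⟨u, v, hx⟩ := h
  have hcycle : u * (x * y) * (v * y) = x * y := by
    rw [← mul_assoc, hx]
  have := hM.isDedekindFiniteMonoid
  exact isUnit_of_mul_isUnit_right (hM.isUnit_of_mul_mul_eq hcycle).2

theorem isUnit_left_of_tdvd_mul {x y : M} (h : TDvd (x * y) y) : IsUnit x := by
  obtain ⟨u, v, hy⟩ := h
  have hcycle : (x * u) * (x * y) * v = x * y := by
    rw [mul_assoc x u, mul_assoc x, hy]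
  have := hM.isDedekindFiniteMonoid
  exact isUnit_of_mul_isUnit_left (hM.isUnit_of_mul_mul_eq hcycle).1

end IsAcyclicMonoid

theorem stmt17 {M : Type*} [Monoid M]
    (hac : ∀ u x v : M, (¬ IsUnit u ∨ ¬ IsUnit v) → u * x * v ≠ x)
    (p : M) (hp : ¬ IsUnit p ∧ ∀ x y : M, TDvd p (x * y) → TDvd p x ∨ TDvd p y) :
    ¬ IsUnit p ∧ ∀ x y : M, ¬ IsUnit x → ¬ IsUnit y → p ≠ x * y := by
  have hM : IsAcyclicMonoid M := hac
  refine ⟨hp.1, ?_⟩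
  rintro x y hx hy rfl
  rcases hp.2 x y ⟨1, 1, by rw [one_mul, mul_one]⟩ with hdvd | hdvd
  · exact hy (hM.isUnit_right_of_tdvd_mul hdvd)
  · exact hx (hM.isUnit_left_of_tdvd_mul hdvd)
end

section
/- Let p be a fixed prime number and let H be the additive submonoid of ℚ≥0 generated by 1 + 1/p together with all positive rationals whose denominator is coprime to p. Then 1 + 1/p is an atom of H, but 1 + 1/p is not a prime element of H. -/
/-!
Write `a = 1 + 1/p` and `ℤ_(p)` for the rationals whose denominator is prime to `p`. Every element
of `H` is `n a + s` with `n ∈ ℕ` and `0 ≤ s ∈ ℤ_(p)`, and since `n a = n + n/p`, such an element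
lies in `ℤ_(p)` only if `p ∣ n`.

As `a ∉ ℤ_(p)`, a decomposition `a = x + y` in `H` has a summand, say `x`, outside `ℤ_(p)`; then
`x = n a + s` with `n ≥ 1`, so `x ≥ a` and `y = 0`. Hence `a` is an atom.

On the other hand `1 + p = p a = a + (p - 1) a`. If `a + z ∈ ℤ_(p)` with `z = n a + s ∈ H`, then
`p ∣ n + 1` and `a + z ≥ p a = p + 1`; so `a` divides neither `1` nor `p` in `H`.
-/

open AddSubmonoid

theorem AddSubmonoid.exists_nsmul_add_of_mem_closure_insert {M : Type*} [AddCommMonoid M]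
    {a x : M} {s : Set M} (hx : x ∈ closure (insert a s)) :
    ∃ n : ℕ, ∃ y ∈ closure s, n • a + y = x := by
  rw [Set.insert_eq, closure_union, mem_sup] at hx
  obtain ⟨_, hn, y, hy, rfl⟩ := hx
  obtain ⟨n, rfl⟩ := mem_closure_singleton.1 hn
  exact ⟨n, y, hy, rfl⟩

namespace Rat

/-- For prime `p`, the localization `ℤ_(p)` of `ℤ` inside `ℚ`. -/
def coprimeDenSubring (p : ℕ) : Subring ℚ where
  carrier := {q | q.den.Coprime p}
  mul_mem' {q r} hq hr := Nat.Coprime.coprime_dvd_left (mul_den_dvd q r) (hq.mul_left hr)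
  one_mem' := Nat.coprime_one_left p
  add_mem' {q r} hq hr := Nat.Coprime.coprime_dvd_left (add_den_dvd q r) (hq.mul_left hr)
  zero_mem' := Nat.coprime_one_left p
  neg_mem' {q} hq := by simpa using hq

theorem dvd_of_div_mem_coprimeDenSubring {p m : ℕ} (hp : p ≠ 0)
    (h : (m / p : ℚ) ∈ coprimeDenSubring p) : p ∣ m := by
  have hden : ((m / p : ℚ).den : ℤ) ∣ p := by simpa [divInt_eq_div] using den_dvd m p
  exact (den_div_natCast_eq_one_iff m p hp).1 (Nat.Coprime.eq_one_of_dvd h (mod_cast hden))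

end Rat

open Rat

section

variable (p : ℕ)

def H : AddSubmonoid ℚ :=
  closure (insert (1 + 1 / (p : ℚ)) {q : ℚ | 0 < q ∧ Nat.Coprime q.den p})

variable {p}

theorem one_add_inv_mem_H : 1 + 1 / (p : ℚ) ∈ H p :=
  subset_closure (Set.mem_insert _ _)

theorem natCast_mem_H {n : ℕ} (hn : 0 < n) : (n : ℚ) ∈ H p :=
  subset_closure (Set.mem_insert_of_mem _ ⟨mod_cast hn, by simp⟩)

theorem exists_eq_natCast_mul_add_of_mem_H {x : ℚ} (hx : x ∈ H p) :
    ∃ n : ℕ, ∃ s : ℚ, 0 ≤ s ∧ s ∈ coprimeDenSubring p ∧ n * (1 + 1 / (p : ℚ)) + s = x := by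
  obtain ⟨n, s, hs, rfl⟩ := exists_nsmul_add_of_mem_closure_insert hx
  have hle : AddSubmonoid.closure {q : ℚ | 0 < q ∧ q.den.Coprime p} ≤
      nonneg ℚ ⊓ (coprimeDenSubring p).toAddSubmonoid :=
    closure_le.2 fun q hq => ⟨le_of_lt hq.1, hq.2⟩
  obtain ⟨hs0, hsR⟩ := hle hs
  exact ⟨n, s, hs0, hsR, by rw [nsmul_eq_mul]⟩

theorem nonneg_of_mem_H {x : ℚ} (hx : x ∈ H p) : 0 ≤ x := by
  obtain ⟨n, s, hs, -, rfl⟩ := exists_eq_natCast_mul_add_of_mem_H hx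
  positivity

theorem dvd_of_natCast_mul_one_add_inv_add_mem (hp : p ≠ 0) {n : ℕ} {s : ℚ}
    (hs : s ∈ coprimeDenSubring p) (h : n * (1 + 1 / (p : ℚ)) + s ∈ coprimeDenSubring p) :
    p ∣ n := by
  refine dvd_of_div_mem_coprimeDenSubring hp ?_
  have hp' : (p : ℚ) ≠ 0 := mod_cast hp
  have : (n / p : ℚ) = (n * (1 + 1 / p) + s) - s - n := by field_simp; ring
  rw [this]
  exact sub_mem (sub_mem h hs) (natCast_mem _ n)

theorem one_add_inv_not_mem_coprimeDenSubring (hp : p.Prime) :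
    1 + 1 / (p : ℚ) ∉ coprimeDenSubring p := fun h =>
  hp.one_lt.ne' <| Nat.dvd_one.1 <|
    dvd_of_natCast_mul_one_add_inv_add_mem hp.ne_zero (zero_mem _) (by simpa using h)

theorem one_add_inv_le_of_mem_H {x : ℚ} (hx : x ∈ H p) (hxR : x ∉ coprimeDenSubring p) :
    1 + 1 / (p : ℚ) ≤ x := by
  obtain ⟨n, s, hs0, hsR, rfl⟩ := exists_eq_natCast_mul_add_of_mem_H hx
  obtain rfl | hn := Nat.eq_zero_or_pos n
  · exact absurd (by simpa using hsR) hxR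
  have hn : (1 : ℚ) ≤ n := mod_cast hn
  have ha : 0 ≤ 1 + 1 / (p : ℚ) := by positivity
  nlinarith

theorem one_add_inv_ne_add (hp : p.Prime) {x y : ℚ} (hx : x ∈ H p) (hy : y ∈ H p)
    (hx0 : x ≠ 0) (hy0 : y ≠ 0) : 1 + 1 / (p : ℚ) ≠ x + y := by
  intro h
  by_cases hxR : x ∈ coprimeDenSubring p
  · by_cases hyR : y ∈ coprimeDenSubring p
    · exact one_add_inv_not_mem_coprimeDenSubring hp (h ▸ add_mem hxR hyR)
    · have := one_add_inv_le_of_mem_H hy hyR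
      exact hx0 (le_antisymm (by linarith) (nonneg_of_mem_H hx))
  · have := one_add_inv_le_of_mem_H hx hxR
    exact hy0 (le_antisymm (by linarith) (nonneg_of_mem_H hy))

theorem add_one_le_one_add_inv_add (hp : p ≠ 0) {z : ℚ} (hz : z ∈ H p)
    (h : 1 + 1 / (p : ℚ) + z ∈ coprimeDenSubring p) : (p : ℚ) + 1 ≤ 1 + 1 / (p : ℚ) + z := by
  obtain ⟨n, s, hs0, hsR, rfl⟩ := exists_eq_natCast_mul_add_of_mem_H hz
  have hsum : 1 + 1 / (p : ℚ) + (n * (1 + 1 / p) + s) = (n + 1 : ℕ) * (1 + 1 / p) + s := by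
    push_cast; ring
  rw [hsum] at h ⊢
  have hle : (p : ℚ) ≤ (n + 1 : ℕ) :=
    mod_cast Nat.le_of_dvd n.succ_pos (dvd_of_natCast_mul_one_add_inv_add_mem hp hsR h)
  have hpa : (p : ℚ) * (1 + 1 / p) = p + 1 := by field_simp
  have ha : 0 ≤ 1 + 1 / (p : ℚ) := by positivity
  nlinarith

theorem one_add_natCast_eq_one_add_inv_add (hp : p ≠ 0) :
    1 + (p : ℚ) = 1 + 1 / (p : ℚ) + (p - 1 : ℕ) • (1 + 1 / (p : ℚ)) := by
  have hp' : (p : ℚ) ≠ 0 := mod_cast hp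
  rw [nsmul_eq_mul, Nat.cast_sub (Nat.one_le_iff_ne_zero.2 hp)]
  field_simp
  ring

end

theorem stmt19 (p : ℕ) (hp : p.Prime) :
    let H : AddSubmonoid ℚ :=
      AddSubmonoid.closure
        (insert (1 + 1 / (p : ℚ)) {q : ℚ | 0 < q ∧ Nat.Coprime q.den p})
    -- `1 + 1/p` is an atom of `H`:
    ((1 + 1 / (p : ℚ)) ∈ H ∧ (1 + 1 / (p : ℚ)) ≠ 0 ∧
        ∀ x ∈ H, ∀ y ∈ H, x ≠ 0 → y ≠ 0 → (1 + 1 / (p : ℚ)) ≠ x + y) ∧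
    -- but `1 + 1/p` is not a prime element of `H`:
    ¬ (∀ x ∈ H, ∀ y ∈ H, (∃ z ∈ H, x + y = (1 + 1 / (p : ℚ)) + z) →
        (∃ z ∈ H, x = (1 + 1 / (p : ℚ)) + z) ∨ (∃ z ∈ H, y = (1 + 1 / (p : ℚ)) + z)) := by
  refine ⟨⟨one_add_inv_mem_H, by positivity, fun x hx y hy => one_add_inv_ne_add hp hx hy⟩, ?_⟩
  intro hprime
  have hpQ : (1 : ℚ) < p := mod_cast hp.one_lt
  have hdvd := hprime 1 (natCast_mem_H (p := p) one_pos) p (natCast_mem_H hp.pos)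
    ⟨_, nsmul_mem one_add_inv_mem_H _, one_add_natCast_eq_one_add_inv_add hp.ne_zero⟩
  rcases hdvd with ⟨z, hz, h⟩ | ⟨z, hz, h⟩
  · have := add_one_le_one_add_inv_add hp.ne_zero hz (h ▸ one_mem _)
    linarith
  · have := add_one_le_one_add_inv_add hp.ne_zero hz (h ▸ natCast_mem _ p)
    linarith
end
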